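/- arXiv:1104.1807 — 2 statements merged into one kernel-verified Lean document; each statement's English description precedes it below -/
import Mathlib

section
/- For every d ≥ 2 and t > 0 there exists a constant C such that for all j ≥ 0 and all x on the unit sphere S^{d-1}, the integral over S^{d-1} of d(x,y)^t / (1 + 2^j d(x,y))^{d+t} with respect to the normalized surface measure is at most C · 2^{-j(t+d-1)}, where d(x,y) is the geodesic distance. -/
/-!
A geodesic cap of radius `r` has measure `O(r^(d-1))`: by the definition of `toSphere` its
measure is `d` times the volume of the cone over it, and in an orthonormal frame whose first
vector is the centre `x` that cone lies in the box `[-1,1] × [-r,r]^(d-1)`, because every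
transverse coordinate of a unit vector `y` is at most `sin d(x,y) ≤ d(x,y)`.
If `2^(k-1) < 2^j d(x,y) ≤ 2^k`, the kernel at `y` is `O(2^(-jt) 2^(-kd))`, so it is dominated by
`∑ₖ 2^(-jt) 2^(-kd) 1{d(x,·) ≤ 2^(k-j)}`, whose integral is
`O(∑ₖ 2^(-jt) 2^(-kd) 2^((k-j)(d-1))) = O(2^(-j(t+d-1)))`.
-/

open MeasureTheory Metric

/-- The surface measure on the unit sphere `S^{d-1} ⊂ ℝ^d` (total mass `ω_{d-1}`). -/
noncomputable def sphereMeasure (d : ℕ) :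
    Measure (sphere (0 : EuclideanSpace ℝ (Fin d)) 1) :=
  (volume : Measure (EuclideanSpace ℝ (Fin d))).toSphere

/-- The geodesic distance `d(x,y) = arccos (x ⬝ y)` on the unit sphere. -/
noncomputable def geodesicDist {d : ℕ} (x y : sphere (0 : EuclideanSpace ℝ (Fin d)) 1) : ℝ :=
  Real.arccos (inner (𝕜 := ℝ) (x : EuclideanSpace ℝ (Fin d)) (y : EuclideanSpace ℝ (Fin d)))

open Set Real
open scoped ENNReal Pointwise RealInnerProductSpace

lemma exists_mul_le_two_pow_and_rpow_div_le {ρ lam s t : ℝ} (hρ : 0 ≤ ρ) (hlam : 0 < lam)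
    (ht : 0 ≤ t) (hst : 0 ≤ s + t) :
    ∃ k : ℕ, lam * ρ ≤ 2 ^ k ∧
      ρ ^ t / (1 + lam * ρ) ^ (s + t) ≤ 2 ^ (s + t) * lam ^ (-t) * ((2 : ℝ) ^ k) ^ (-s) := by
  have hρ_eq : ρ ^ t = lam ^ (-t) * (lam * ρ) ^ t := by
    rw [mul_rpow hlam.le hρ, rpow_neg hlam.le, inv_mul_cancel_left₀ (rpow_pos_of_pos hlam t).ne']
  have hlamρ : 0 ≤ lam * ρ := mul_nonneg hlam.le hρ
  by_cases hsmall : lam * ρ ≤ 1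
  · refine ⟨0, by simpa using hsmall, ?_⟩
    calc ρ ^ t / (1 + lam * ρ) ^ (s + t) ≤ ρ ^ t :=
          div_le_self (rpow_nonneg hρ t) (one_le_rpow (by linarith) hst)
      _ ≤ lam ^ (-t) * 1 ^ t := by
          rw [hρ_eq]; gcongr
      _ ≤ 2 ^ (s + t) * lam ^ (-t) * ((2 : ℝ) ^ 0) ^ (-s) := by
          rw [one_rpow, pow_zero, one_rpow, mul_one, mul_one]
          exact le_mul_of_one_le_left (rpow_nonneg hlam.le _) (one_le_rpow one_le_two hst)
  · obtain ⟨m, hm_le, hm_lt⟩ := exists_nat_pow_near (not_le.1 hsmall).le one_lt_two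
    refine ⟨m + 1, hm_lt.le, ?_⟩
    have h2m : (0 : ℝ) < 2 ^ m := by positivity
    calc ρ ^ t / (1 + lam * ρ) ^ (s + t)
        ≤ lam ^ (-t) * ((2 : ℝ) ^ (m + 1)) ^ t / (2 ^ m) ^ (s + t) := by
          rw [hρ_eq]
          gcongr
          linarith
      _ = 2 ^ (s + t) * lam ^ (-t) * ((2 : ℝ) ^ (m + 1)) ^ (-s) := by
          rw [pow_succ, mul_rpow h2m.le zero_le_two, mul_rpow h2m.le zero_le_two, rpow_add h2m,
            rpow_add two_pos, rpow_neg h2m.le, rpow_neg zero_le_two]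
          field_simp

lemma lintegral_rpow_div_le_tsum_mul_measure_sublevel {α : Type*} [MeasurableSpace α]
    (μ : Measure α) {g : α → ℝ} (hg : Measurable g) (hg0 : ∀ y, 0 ≤ g y) {s t : ℝ}
    (ht : 0 ≤ t) (hst : 0 ≤ s + t) {lam : ℝ} (hlam : 0 < lam) :
    ∫⁻ y, ENNReal.ofReal (g y ^ t / (1 + lam * g y) ^ (s + t)) ∂μ
      ≤ ∑' k : ℕ, ENNReal.ofReal (2 ^ (s + t) * lam ^ (-t) * ((2 : ℝ) ^ k) ^ (-s))
          * μ {y | g y ≤ 2 ^ k / lam} := by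
  set c : ℕ → ℝ≥0∞ := fun k =>
    ENNReal.ofReal (2 ^ (s + t) * lam ^ (-t) * ((2 : ℝ) ^ k) ^ (-s))
  set cap : ℕ → Set α := fun k => {y | g y ≤ 2 ^ k / lam}
  have hcap : ∀ k, MeasurableSet (cap k) := fun k => measurableSet_le hg measurable_const
  have hpointwise : ∀ y, ENNReal.ofReal (g y ^ t / (1 + lam * g y) ^ (s + t))
      ≤ ∑' k, (cap k).indicator (fun _ => c k) y := by
    intro y
    obtain ⟨k, hk, hle⟩ := exists_mul_le_two_pow_and_rpow_div_le (hg0 y) hlam ht hst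
    have hy : y ∈ cap k := by
      show g y ≤ 2 ^ k / lam
      rwa [le_div_iff₀ hlam, mul_comm]
    calc _ ≤ c k := ENNReal.ofReal_le_ofReal hle
      _ = (cap k).indicator (fun _ => c k) y := (indicator_of_mem hy (fun _ => c k)).symm
      _ ≤ _ := ENNReal.le_tsum k
  calc _ ≤ ∫⁻ y, ∑' k, (cap k).indicator (fun _ => c k) y ∂μ := lintegral_mono hpointwise
    _ = ∑' k, c k * μ (cap k) := by
        rw [lintegral_tsum fun k => aemeasurable_const.indicator (hcap k)]
        simp_rw [lintegral_indicator_const (hcap _)]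

theorem lintegral_rpow_div_le_of_measure_sublevel_le {α : Type*} [MeasurableSpace α]
    (μ : Measure α) {g : α → ℝ} (hg : Measurable g) (hg0 : ∀ y, 0 ≤ g y) {A n s t : ℝ}
    (hA : 0 ≤ A) (hns : n < s) (ht : 0 ≤ t) (hst : 0 ≤ s + t)
    (hμ : ∀ r, 0 < r → μ {y | g y ≤ r} ≤ ENNReal.ofReal (A * r ^ n)) {lam : ℝ}
    (hlam : 0 < lam) :
    ∫⁻ y, ENNReal.ofReal (g y ^ t / (1 + lam * g y) ^ (s + t)) ∂μ
      ≤ ENNReal.ofReal (2 ^ (s + t) * A / (1 - 2 ^ (n - s)) * lam ^ (-(t + n))) := by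
  set q : ℝ := 2 ^ (n - s)
  have hq : q < 1 := rpow_lt_one_of_one_lt_of_neg one_lt_two (by linarith)
  have hq0 : 0 ≤ q := by positivity
  have hterm : ∀ k : ℕ,
      2 ^ (s + t) * lam ^ (-t) * ((2 : ℝ) ^ k) ^ (-s) * (A * (2 ^ k / lam) ^ n)
      = 2 ^ (s + t) * A * lam ^ (-(t + n)) * q ^ k := by
    intro k
    rw [div_rpow (by positivity) hlam.le, neg_add, rpow_add hlam, rpow_neg hlam.le n,
      ← rpow_natCast, ← rpow_natCast, ← rpow_mul zero_le_two, ← rpow_mul zero_le_two,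
      ← rpow_mul zero_le_two, show (n - s) * k = k * -s + k * n by ring,
      rpow_add two_pos (k * -s)]
    ring
  calc _ ≤ _ := lintegral_rpow_div_le_tsum_mul_measure_sublevel μ hg hg0 ht hst hlam
    _ ≤ ∑' k : ℕ, ENNReal.ofReal (2 ^ (s + t) * A * lam ^ (-(t + n)) * q ^ k) := by
        refine ENNReal.tsum_le_tsum fun k => ?_
        refine (mul_le_mul_right (hμ (2 ^ k / lam) (by positivity)) _).trans_eq ?_
        rw [← ENNReal.ofReal_mul (by positivity), hterm]
    _ = ENNReal.ofReal (2 ^ (s + t) * A / (1 - q) * lam ^ (-(t + n))) := by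
        rw [← ENNReal.ofReal_tsum_of_nonneg (fun k => by positivity)
          ((summable_geometric_of_lt_one hq0 hq).mul_left _), tsum_mul_left,
          tsum_geometric_of_lt_one hq0 hq]
        ring_nf

lemma integral_le_of_lintegral_ofReal_le {α : Type*} [MeasurableSpace α] {μ : Measure α}
    {f : α → ℝ} (hf : ∀ y, 0 ≤ f y) {C : ℝ} (hC : 0 ≤ C)
    (h : ∫⁻ y, ENNReal.ofReal (f y) ∂μ ≤ ENNReal.ofReal C) : ∫ y, f y ∂μ ≤ C := by
  refine (Real.le_norm_self _).trans ((norm_integral_le_lintegral_norm f).trans ?_)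
  simp_rw [Real.norm_of_nonneg (hf _)]
  exact ENNReal.toReal_le_of_le_ofReal hC h

lemma exists_orthonormalBasis_apply_eq {𝕜 E ι : Type*} [RCLike 𝕜] [NormedAddCommGroup E]
    [InnerProductSpace 𝕜 E] [FiniteDimensional 𝕜 E] [Fintype ι]
    (card_ι : Module.finrank 𝕜 E = Fintype.card ι) (i : ι) {x : E} (hx : ‖x‖ = 1) :
    ∃ b : OrthonormalBasis ι 𝕜 E, b i = x := by
  have hv : Orthonormal 𝕜 (({i} : Set ι).domRestrict fun _ => x) :=
    ⟨fun _ => hx, fun j k hjk => absurd (Subsingleton.elim j k) hjk⟩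
  obtain ⟨b, hb⟩ := hv.exists_orthonormalBasis_extension_of_card_eq card_ι
  exact ⟨b, hb i rfl⟩

lemma Orthonormal.abs_inner_le_arccos_inner {E ι : Type*} [NormedAddCommGroup E]
    [InnerProductSpace ℝ E] {v : ι → E} (hv : Orthonormal ℝ v) {i j : ι} (hij : i ≠ j)
    {y : E} (hy : ‖y‖ = 1) : |⟪v j, y⟫| ≤ arccos ⟪v i, y⟫ := by
  classical
  have hbessel : ⟪v i, y⟫ ^ 2 + ⟪v j, y⟫ ^ 2 ≤ 1 := by
    simpa [Finset.sum_pair hij, hy] using hv.sum_inner_products_le y (s := {i, j})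
  calc |⟪v j, y⟫| = √(⟪v j, y⟫ ^ 2) := (sqrt_sq_eq_abs _).symm
    _ ≤ √(1 - ⟪v i, y⟫ ^ 2) := sqrt_le_sqrt (by linarith)
    _ = sin (arccos ⟪v i, y⟫) := (sin_arccos _).symm
    _ ≤ arccos ⟪v i, y⟫ := sin_le (arccos_nonneg _)

lemma geodesicDist_nonneg {d : ℕ} (x y : sphere (0 : EuclideanSpace ℝ (Fin d)) 1) :
    0 ≤ geodesicDist x y :=
  arccos_nonneg _

lemma continuous_geodesicDist {d : ℕ} (x : sphere (0 : EuclideanSpace ℝ (Fin d)) 1) :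
    Continuous (geodesicDist x) :=
  continuous_arccos.comp (continuous_const.inner continuous_subtype_val)

def capBox (d : ℕ) [NeZero d] (r : ℝ) : Set (Fin d → ℝ) :=
  univ.pi (Function.update (fun _ => Icc (-r) r) 0 (Icc (-1) 1))

section Cap

variable {d : ℕ} [NeZero d]

lemma smul_geodesicCap_subset_preimage_capBox {x : sphere (0 : EuclideanSpace ℝ (Fin d)) 1}
    {b : OrthonormalBasis (Fin d) ℝ (EuclideanSpace ℝ (Fin d))} (hb : b 0 = x) (r : ℝ) :
    Ioo (0 : ℝ) 1 • (Subtype.val '' {y | geodesicDist x y ≤ r})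
      ⊆ (WithLp.ofLp ∘ b.repr) ⁻¹' capBox d r := by
  rintro _ ⟨c, hc, _, ⟨y, hy, rfl⟩, rfl⟩ i -
  have hy1 : ‖(y : EuclideanSpace ℝ (Fin d))‖ = 1 := by simp
  have hcoord : |b.repr (c • (y : EuclideanSpace ℝ (Fin d))) i| ≤ |⟪b i, y⟫| := by
    rw [map_smul, PiLp.smul_apply, b.repr_apply_apply, smul_eq_mul, abs_mul, abs_of_pos hc.1]
    exact mul_le_of_le_one_left (abs_nonneg _) hc.2.le
  rcases eq_or_ne i 0 with rfl | hi
  · rw [Function.update_self, mem_Icc, ← abs_le]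
    refine hcoord.trans ?_
    simpa [hy1] using abs_real_inner_le_norm (b 0) y
  · rw [Function.update_of_ne hi, mem_Icc, ← abs_le]
    refine hcoord.trans ((b.orthonormal.abs_inner_le_arccos_inner hi.symm hy1).trans ?_)
    rwa [hb]

lemma volume_capBox {r : ℝ} (hr : 0 ≤ r) :
    volume (capBox d r) = ENNReal.ofReal (2 ^ d * r ^ (d - 1)) := by
  classical
  rw [capBox, volume_pi_pi]
  simp_rw [Function.apply_update (fun _ => (volume : Measure ℝ)), Real.volume_Icc]
  rw [Finset.prod_update_of_mem (Finset.mem_univ 0), Finset.prod_const,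
    Finset.card_univ_sdiff, Finset.card_singleton, Fintype.card_fin,
    ← ENNReal.ofReal_pow (by linarith), ← ENNReal.ofReal_mul (by norm_num)]
  congr 1
  rw [show (1 : ℝ) - -1 = 2 by norm_num, show r - -r = 2 * r by ring, mul_pow, ← mul_assoc,
    ← pow_succ', Nat.sub_add_cancel NeZero.one_le]

lemma measurableSet_capBox (r : ℝ) : MeasurableSet (capBox d r) :=
  MeasurableSet.univ_pi fun i => by rcases eq_or_ne i 0 with rfl | hi <;> simp [*]

lemma sphereMeasure_geodesicCap_le (x : sphere (0 : EuclideanSpace ℝ (Fin d)) 1) {r : ℝ}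
    (hr : 0 ≤ r) :
    sphereMeasure d {y | geodesicDist x y ≤ r}
      ≤ ENNReal.ofReal (d * 2 ^ d * r ^ ((d : ℝ) - 1)) := by
  obtain ⟨b, hb⟩ := exists_orthonormalBasis_apply_eq (𝕜 := ℝ) finrank_euclideanSpace 0
    (norm_eq_of_mem_sphere x)
  have hcap : MeasurableSet {y | geodesicDist x y ≤ r} :=
    measurableSet_le (continuous_geodesicDist x).measurable measurable_const
  have hcoords : MeasurePreserving (WithLp.ofLp ∘ b.repr) :=
    (PiLp.volume_preserving_ofLp (Fin d)).comp b.measurePreserving_repr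
  calc sphereMeasure d {y | geodesicDist x y ≤ r}
      = d * volume (Ioo (0 : ℝ) 1 • (Subtype.val '' {y | geodesicDist x y ≤ r})) := by
        rw [sphereMeasure, Measure.toSphere_apply' _ hcap, finrank_euclideanSpace_fin]
    _ ≤ d * ENNReal.ofReal (2 ^ d * r ^ (d - 1)) := by
        rw [← volume_capBox hr,
          ← hcoords.measure_preimage (measurableSet_capBox r).nullMeasurableSet]
        gcongr
        exact smul_geodesicCap_subset_preimage_capBox hb r
    _ = ENNReal.ofReal (d * 2 ^ d * r ^ ((d : ℝ) - 1)) := by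
        rw [← ENNReal.ofReal_natCast, ← ENNReal.ofReal_mul (Nat.cast_nonneg d), mul_assoc,
          ← rpow_natCast r, Nat.cast_sub NeZero.one_le, Nat.cast_one]

end Cap

/-- For every `d ≥ 2` and `t > 0` there is a constant `C` such that for all `j ≥ 0` and
`x ∈ S^{d-1}`, `∫ d(x,y)^t / (1 + 2^j d(x,y))^{d+t} dy ≤ C ⬝ 2^{-j(t+d-1)}`. -/
theorem integral_geodesic_kernel_le (d : ℕ) (hd : 2 ≤ d) (t : ℝ) (ht : 0 < t) :
    ∃ C > 0, ∀ (j : ℕ) (x : sphere (0 : EuclideanSpace ℝ (Fin d)) 1),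
      (∫ y, geodesicDist x y ^ t / (1 + 2 ^ j * geodesicDist x y) ^ ((d : ℝ) + t)
          ∂(sphereMeasure d))
        ≤ C * (2 : ℝ) ^ (-(j : ℝ) * (t + d - 1)) := by
  have : NeZero d := ⟨by omega⟩
  have hq : (2 : ℝ) ^ ((d : ℝ) - 1 - d) < 1 :=
    rpow_lt_one_of_one_lt_of_neg one_lt_two (by linarith)
  refine ⟨2 ^ ((d : ℝ) + t) * (d * 2 ^ d) / (1 - 2 ^ ((d : ℝ) - 1 - d)),
    div_pos (by positivity) (sub_pos.2 hq), fun j x => ?_⟩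
  have hscale : ((2 : ℝ) ^ j) ^ (-(t + ((d : ℝ) - 1))) = 2 ^ (-(j : ℝ) * (t + d - 1)) := by
    rw [← rpow_natCast, ← rpow_mul zero_le_two]
    ring_nf
  refine integral_le_of_lintegral_ofReal_le
    (fun y => by have := geodesicDist_nonneg x y; positivity) (by positivity) ?_
  rw [← hscale]
  exact lintegral_rpow_div_le_of_measure_sublevel_le (sphereMeasure d)
    (continuous_geodesicDist x).measurable (geodesicDist_nonneg x) (by positivity)
    (sub_one_lt (d : ℝ)) ht.le (by positivity) (fun r hr => sphereMeasure_geodesicCap_le x hr.le)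
    (by positivity)
end

section
/- Suppose the quadrature weights satisfy λ_η ≥ c_λ 2^{-i(d-1)} and the Littlewood–Paley function satisfies b(x) ≥ c_a² > 0 for x ∈ [1, 7/4]. Then there exists C_7 > 0 depending only on c_a, c_λ, d such that for all i and all η ∈ H_i, the needlet ψ_{iη}(x) = √λ_η Σ_k √(b(k/2^i)) Z^k(η,x) satisfies ψ_{iη}(η) ≥ C_7 · 2^{i(d-1)/2}. -/
/-- Lower bound for needlets at their center: if `λ_η ≥ c_λ 2^{-i(d-1)}` and
`b ≥ c_a² > 0` on `[1, 7/4]`, then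
`ψ_{iη}(η) = √λ_η Σ_{2^{i-1}<k<2^{i+1}} √(b(k/2^i)) Z^k(η,η) ≥ C₇ 2^{i(d-1)/2}`,
where `Z^k(η,η) = (C(d+k-1,d-1) − C(d+k-3,d-1))/ω_{d-1}`. -/
theorem needlet_center_lower_bound (d : ℕ) (hd : 3 ≤ d) (ω : ℝ) (hω : 0 < ω)
    (ca clam : ℝ) (hca : 0 < ca) (hclam : 0 < clam)
    (b : ℝ → ℝ) (hb0 : ∀ x, 0 ≤ b x) (hb1 : ∀ x, b x ≤ 1)
    (hblow : ∀ x ∈ Set.Icc (1 : ℝ) (7 / 4), ca ^ 2 ≤ b x)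
    (Z : ℕ → ℝ)
    (hZ : ∀ k, Z k = (((d + k - 1).choose (d - 1) : ℝ) - ((d + k - 3).choose (d - 1) : ℝ)) / ω) :
    ∃ C₇ > 0, ∀ i : ℕ, 1 ≤ i → ∀ lam : ℝ,
      clam * (2 : ℝ) ^ (-(i : ℝ) * (d - 1)) ≤ lam →
      C₇ * (2 : ℝ) ^ ((i : ℝ) * (d - 1) / 2) ≤
        Real.sqrt lam * ∑ k ∈ Finset.Ioo (2 ^ (i - 1) : ℕ) (2 ^ (i + 1)),
          Real.sqrt (b ((k : ℝ) / 2 ^ i)) * Z k := by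
  have hfac : (0 : ℝ) < ((d - 2).factorial : ℝ) := by positivity
  refine ⟨Real.sqrt clam * ca / (2 * ω * ((d - 2).factorial : ℝ)), by positivity, ?_⟩
  intro i hi lam hlam
  have h2i : (0 : ℝ) < (2 : ℝ) ^ i := by positivity
  -- every Z k is nonneg
  have hZnn : ∀ k, 0 ≤ Z k := by
    intro k
    rw [hZ]
    apply div_nonneg _ hω.le
    have h := Nat.choose_mono (d - 1) (show d + k - 3 ≤ d + k - 1 by omega)
    have := (Nat.cast_le (α := ℝ)).mpr h
    linarith
  -- the subset
  set S : Finset ℕ := Finset.Icc (2 ^ i) (2 ^ i + 2 ^ (i - 1)) with hS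
  have hsub : S ⊆ Finset.Ioo (2 ^ (i - 1) : ℕ) (2 ^ (i + 1)) := by
    intro k hk
    simp only [hS, Finset.mem_Icc] at hk
    have h1 : (2 : ℕ) ^ (i - 1) < 2 ^ i := Nat.pow_lt_pow_right (by norm_num) (by omega)
    have h2 : (2 : ℕ) ^ i + 2 ^ (i - 1) < 2 ^ (i + 1) := by
      have : (2 : ℕ) ^ (i + 1) = 2 ^ i + 2 ^ i := by ring
      omega
    simp only [Finset.mem_Ioo]
    omega
  -- per-term bound on S
  have hterm : ∀ k ∈ S, ca * ((2 : ℝ) ^ (i * (d - 2)) / (((d - 2).factorial : ℝ) * ω)) ≤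
      Real.sqrt (b ((k : ℝ) / 2 ^ i)) * Z k := by
    intro k hk
    simp only [hS, Finset.mem_Icc] at hk
    obtain ⟨hk1, hk2⟩ := hk
    -- b lower bound
    have hx : ((k : ℝ) / 2 ^ i) ∈ Set.Icc (1 : ℝ) (7 / 4) := by
      constructor
      · rw [le_div_iff₀ h2i]
        have : ((2 ^ i : ℕ) : ℝ) ≤ (k : ℝ) := Nat.cast_le.mpr hk1
        push_cast at this ⊢
        linarith
      · rw [div_le_iff₀ h2i]
        have hkk : (k : ℝ) ≤ ((2 ^ i + 2 ^ (i - 1) : ℕ) : ℝ) := Nat.cast_le.mpr hk2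
        have hhalf : ((2 : ℕ) ^ (i - 1) : ℝ) ≤ ((2 : ℕ) ^ i : ℝ) * (3 / 4) := by
          have : (2 : ℕ) ^ (i - 1) * 4 ≤ 2 ^ i * 3 := by
            have : (2 : ℕ) ^ i = 2 ^ (i - 1) * 2 := by
              rw [← pow_succ]
              congr 1
              omega
            omega
          have h4 := (Nat.cast_le (α := ℝ)).mpr this
          push_cast at h4 ⊢
          linarith
        push_cast at hkk hhalf ⊢
        linarith
    have hsb : ca ≤ Real.sqrt (b ((k : ℝ) / 2 ^ i)) := by
      have := hblow _ hx
      calc ca = Real.sqrt (ca ^ 2) := by rw [Real.sqrt_sq hca.le]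
        _ ≤ _ := Real.sqrt_le_sqrt this
    -- Z lower bound
    have hZk : (2 : ℝ) ^ (i * (d - 2)) / (((d - 2).factorial : ℝ) * ω) ≤ Z k := by
      rw [hZ]
      have hchoose : ((d + k - 2).choose (d - 2) : ℝ) + ((d + k - 3).choose (d - 1) : ℝ) ≤
          ((d + k - 1).choose (d - 1) : ℝ) := by
        have e1 : d + k - 1 = (d + k - 2) + 1 := by omega
        have e2 : d - 1 = (d - 2) + 1 := by omega
        have key : (d + k - 1).choose (d - 1)
            = (d + k - 2).choose (d - 2) + (d + k - 2).choose (d - 1) := by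
          rw [e1, e2]
          exact Nat.choose_succ_succ _ _
        have hmono : (d + k - 3).choose (d - 1) ≤ (d + k - 2).choose (d - 1) :=
          Nat.choose_mono (d - 1) (by omega)
        have : (d + k - 2).choose (d - 2) + (d + k - 3).choose (d - 1) ≤
            (d + k - 1).choose (d - 1) := by omega
        exact_mod_cast this
      have hpow : ((2 : ℝ) ^ i) ^ (d - 2) / ((d - 2).factorial : ℝ) ≤
          ((d + k - 2).choose (d - 2) : ℝ) := by
        have hple := Nat.pow_le_choose (α := ℝ) (d - 2) (d + k - 2)
        refine le_trans ?_ hple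
        apply div_le_div_of_nonneg_right _ hfac.le
        apply pow_le_pow_left₀ h2i.le
        have e4 : d + k - 2 + 1 - (d - 2) = k + 1 := by omega
        rw [e4]
        have : ((2 ^ i : ℕ) : ℝ) ≤ ((k + 1 : ℕ) : ℝ) := Nat.cast_le.mpr (by omega)
        push_cast at this ⊢
        linarith
      have hpow2 : (2 : ℝ) ^ (i * (d - 2)) = ((2 : ℝ) ^ i) ^ (d - 2) := by
        rw [pow_mul]
      have hAB : ((2 : ℝ) ^ i) ^ (d - 2) / ((d - 2).factorial : ℝ) ≤
          ((d + k - 1).choose (d - 1) : ℝ) - ((d + k - 3).choose (d - 1) : ℝ) := by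
        linarith
      rw [hpow2, ← div_div]
      gcongr
    calc ca * ((2 : ℝ) ^ (i * (d - 2)) / (((d - 2).factorial : ℝ) * ω))
        ≤ Real.sqrt (b ((k : ℝ) / 2 ^ i)) * ((2 : ℝ) ^ (i * (d - 2)) / (((d - 2).factorial : ℝ) * ω)) := by
          apply mul_le_mul_of_nonneg_right hsb
          positivity
      _ ≤ Real.sqrt (b ((k : ℝ) / 2 ^ i)) * Z k := by
          apply mul_le_mul_of_nonneg_left hZk (Real.sqrt_nonneg _)
  -- sum bound
  set c0 : ℝ := ca * ((2 : ℝ) ^ (i * (d - 2)) / (((d - 2).factorial : ℝ) * ω)) with hc0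
  have hc0nn : 0 ≤ c0 := by positivity
  have hsum : (2 : ℝ) ^ (i - 1) * c0 ≤
      ∑ k ∈ Finset.Ioo (2 ^ (i - 1) : ℕ) (2 ^ (i + 1)),
        Real.sqrt (b ((k : ℝ) / 2 ^ i)) * Z k := by
    have h1 : ∑ _k ∈ S, c0 ≤ ∑ k ∈ S, Real.sqrt (b ((k : ℝ) / 2 ^ i)) * Z k :=
      Finset.sum_le_sum hterm
    have h2 : ∑ k ∈ S, Real.sqrt (b ((k : ℝ) / 2 ^ i)) * Z k ≤
        ∑ k ∈ Finset.Ioo (2 ^ (i - 1) : ℕ) (2 ^ (i + 1)),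
          Real.sqrt (b ((k : ℝ) / 2 ^ i)) * Z k :=
      Finset.sum_le_sum_of_subset_of_nonneg hsub
        (fun k _ _ => mul_nonneg (Real.sqrt_nonneg _) (hZnn k))
    have h3 : ∑ _k ∈ S, c0 = ((2 ^ (i - 1) + 1 : ℕ) : ℝ) * c0 := by
      have hcard : S.card = 2 ^ (i - 1) + 1 := by
        rw [hS, Nat.card_Icc, Nat.add_assoc, Nat.add_sub_cancel_left]
      rw [Finset.sum_const, hcard, nsmul_eq_mul]
    have h4 : (2 : ℝ) ^ (i - 1) * c0 ≤ ((2 ^ (i - 1) + 1 : ℕ) : ℝ) * c0 := by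
      apply mul_le_mul_of_nonneg_right _ hc0nn
      push_cast
      linarith
    linarith
  -- sqrt lam bound
  have hsl : Real.sqrt clam * (2 : ℝ) ^ (-(i : ℝ) * (d - 1) / 2) ≤ Real.sqrt lam := by
    have h := Real.sqrt_le_sqrt hlam
    rw [Real.sqrt_mul hclam.le] at h
    refine le_trans (le_of_eq ?_) h
    congr 1
    rw [Real.sqrt_eq_rpow, ← Real.rpow_mul (by norm_num : (0 : ℝ) ≤ 2)]
    congr 1
    ring
  -- put it together
  have e5 : (2 : ℝ) ^ (i - 1) = (2 : ℝ) ^ (((i : ℝ) - 1) : ℝ) := by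
    rw [← Real.rpow_natCast 2 (i - 1)]
    congr 1
    rw [Nat.cast_sub hi, Nat.cast_one]
  have e6 : (2 : ℝ) ^ (i * (d - 2)) = (2 : ℝ) ^ (((i : ℝ) * ((d : ℝ) - 2)) : ℝ) := by
    rw [← Real.rpow_natCast 2 (i * (d - 2))]
    congr 1
    rw [Nat.cast_mul, Nat.cast_sub (show 2 ≤ d by omega)]
    push_cast
    ring
  have key : (2 : ℝ) ^ (-(i : ℝ) * ((d : ℝ) - 1) / 2) *
      ((2 : ℝ) ^ (((i : ℝ) - 1) : ℝ) * (2 : ℝ) ^ (((i : ℝ) * ((d : ℝ) - 2)) : ℝ)) =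
      (2 : ℝ) ^ ((i : ℝ) * ((d : ℝ) - 1) / 2) / 2 := by
    rw [← Real.rpow_add (by norm_num : (0 : ℝ) < 2),
      ← Real.rpow_add (by norm_num : (0 : ℝ) < 2),
      show -(i : ℝ) * ((d : ℝ) - 1) / 2 + (((i : ℝ) - 1) + (i : ℝ) * ((d : ℝ) - 2))
        = (i : ℝ) * ((d : ℝ) - 1) / 2 - 1 from by ring,
      Real.rpow_sub (by norm_num : (0 : ℝ) < 2), Real.rpow_one]
  have heq : Real.sqrt clam * ca / (2 * ω * ((d - 2).factorial : ℝ)) *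
      (2 : ℝ) ^ ((i : ℝ) * ((d : ℝ) - 1) / 2) =
      (Real.sqrt clam * (2 : ℝ) ^ (-(i : ℝ) * ((d : ℝ) - 1) / 2)) * ((2 : ℝ) ^ (i - 1) * c0) := by
    rw [hc0, e5, e6]
    linear_combination (-(Real.sqrt clam * ca / (((d - 2).factorial : ℝ) * ω))) * key
  calc Real.sqrt clam * ca / (2 * ω * ((d - 2).factorial : ℝ)) *
        (2 : ℝ) ^ ((i : ℝ) * ((d : ℝ) - 1) / 2)
      = (Real.sqrt clam * (2 : ℝ) ^ (-(i : ℝ) * ((d : ℝ) - 1) / 2)) *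
        ((2 : ℝ) ^ (i - 1) * c0) := heq
    _ ≤ Real.sqrt lam * ((2 : ℝ) ^ (i - 1) * c0) := by
        apply mul_le_mul_of_nonneg_right hsl
        positivity
    _ ≤ Real.sqrt lam * ∑ k ∈ Finset.Ioo (2 ^ (i - 1) : ℕ) (2 ^ (i + 1)),
          Real.sqrt (b ((k : ℝ) / 2 ^ i)) * Z k := by
        apply mul_le_mul_of_nonneg_left hsum (Real.sqrt_nonneg _)
end
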